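/- arXiv:2509.17415 — 2 statements merged into one kernel-verified Lean document; each statement's English description precedes it below -/
import Mathlib

section
/- Let 0 < a < 1/√2 and let θ₀, θ₁ ∈ ℝ be such that H(a,θ₀) ≠ H(a,θ₁) and the interiors of H(a,θ₀) and H(a,θ₁) (defined by strict inequality in the defining condition) have a common point. Then there exist a' with 0 < a' < a and θ' ∈ ℝ such that interior(H(a,θ₀)) ∩ interior(H(a,θ₁)) ⊆ interior(H(a',θ')). -/
/-- Rotation of the plane `ℝ × ℝ` about the origin by angle `θ`. -/
noncomputable def planeRot (θ : ℝ) (p : ℝ × ℝ) : ℝ × ℝ :=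
  (p.1 * Real.cos θ - p.2 * Real.sin θ, p.1 * Real.sin θ + p.2 * Real.cos θ)

/-- The horocycle region `H(a,θ)`: the image under the rotation about the origin by
angle `θ` of the closed elliptical region `{(x,y) : a²x² + (y − (1 − a²))² ≤ a⁴}`. -/
noncomputable def horoRegion (a θ : ℝ) : Set (ℝ × ℝ) :=
  planeRot θ '' {p | a ^ 2 * p.1 ^ 2 + (p.2 - (1 - a ^ 2)) ^ 2 ≤ a ^ 4}

/-- The interior of the horocycle region `H(a,θ)`, defined by strict inequality. -/
noncomputable def horoInterior (a θ : ℝ) : Set (ℝ × ℝ) :=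
  planeRot θ '' {p | a ^ 2 * p.1 ^ 2 + (p.2 - (1 - a ^ 2)) ^ 2 < a ^ 4}

/-!
In the Klein model of the hyperbolic plane, `H(a, θ)` is the horoball
`{p : (1 - ⟪p, u⟫) / √(1 - ‖p‖²) < s}` at its tangency point `u`, with `s = a / √(1 - a²)`.
In hyperboloid coordinates the left side is the Minkowski pairing of `(1, p) / √(1 - ‖p‖²)`
with `(1, u)`, hence linear in `(1, u)`. For distinct ideal points `u₀, u₁` write
`(2, u₀ + u₁) = (2 - c) (1, 0) + c (1, w)` with `c = ‖u₀ + u₁‖ < 2` and `‖w‖ = 1`; the pairing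
with `(1, 0)` is `1 / √(1 - ‖p‖²) ≥ 1`, so on the common interior the function at `w` stays
below `s' = (c - 2 + 2s) / c`. A common point forces `s' > 0`, and `s' < s` because `s < 1`,
which is the condition `a < 1 / √2`.
-/

open Real Complex InnerProductSpace

section Horoball

variable {E : Type*} [NormedAddCommGroup E]

lemma one_sub_norm_sq_pos {p : E} (hp : ‖p‖ < 1) : 0 < 1 - ‖p‖ ^ 2 := by
  nlinarith [norm_nonneg p]

lemma sqrt_one_sub_norm_sq_pos {p : E} (hp : ‖p‖ < 1) : 0 < √(1 - ‖p‖ ^ 2) :=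
  Real.sqrt_pos.mpr (one_sub_norm_sq_pos hp)

lemma sqrt_one_sub_norm_sq_le_one (p : E) : √(1 - ‖p‖ ^ 2) ≤ 1 :=
  Real.sqrt_le_one.mpr <| by nlinarith [norm_nonneg p]

variable [InnerProductSpace ℝ E]

/-- `exp` of the Busemann function of the ideal point `u` in the Klein model of hyperbolic space. -/
noncomputable def horoFun (u p : E) : ℝ := (1 - ⟪p, u⟫_ℝ) / √(1 - ‖p‖ ^ 2)

def horoball (s : ℝ) (u : E) : Set E := {p | ‖p‖ < 1 ∧ horoFun u p < s}

lemma inner_lt_one_of_norm_lt_one {u p : E} (hu : ‖u‖ ≤ 1) (hp : ‖p‖ < 1) : ⟪p, u⟫_ℝ < 1 :=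
  (real_inner_le_norm p u).trans_lt <| by nlinarith [norm_nonneg p, norm_nonneg u]

lemma horoFun_pos {u p : E} (hu : ‖u‖ ≤ 1) (hp : ‖p‖ < 1) : 0 < horoFun u p :=
  div_pos (sub_pos.mpr (inner_lt_one_of_norm_lt_one hu hp)) (sqrt_one_sub_norm_sq_pos hp)

lemma mem_horoball_iff_sq {s : ℝ} {u p : E} (hs : 0 ≤ s) (hu : ‖u‖ ≤ 1) :
    p ∈ horoball s u ↔ (1 - ⟪p, u⟫_ℝ) ^ 2 < s ^ 2 * (1 - ‖p‖ ^ 2) := by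
  have hiff : ‖p‖ < 1 → (horoFun u p < s ↔ (1 - ⟪p, u⟫_ℝ) ^ 2 < s ^ 2 * (1 - ‖p‖ ^ 2)) := by
    intro hp
    have hG := sqrt_one_sub_norm_sq_pos hp
    have hsq : s ^ 2 * (1 - ‖p‖ ^ 2) = (s * √(1 - ‖p‖ ^ 2)) ^ 2 := by
      rw [mul_pow, Real.sq_sqrt (one_sub_norm_sq_pos hp).le]
    rw [horoFun, div_lt_iff₀ hG, hsq]
    exact (pow_lt_pow_iff_left₀ (sub_pos.mpr (inner_lt_one_of_norm_lt_one hu hp)).le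
      (by positivity) two_ne_zero).symm
  refine ⟨fun ⟨hp, h⟩ => (hiff hp).mp h, fun h => ?_⟩
  have hp : ‖p‖ < 1 := by
    by_contra! hp
    have hG : 1 - ‖p‖ ^ 2 ≤ 0 := by nlinarith
    nlinarith [sq_nonneg (1 - ⟪p, u⟫_ℝ), mul_nonpos_of_nonneg_of_nonpos (sq_nonneg s) hG]
  exact ⟨hp, (hiff hp).mpr h⟩

lemma two_sub_norm_add_add_mul_horoFun_le {u₀ u₁ p : E} (hu : ‖u₀ + u₁‖ ≤ 2) (hp : ‖p‖ < 1) :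
    2 - ‖u₀ + u₁‖ + ‖u₀ + u₁‖ * horoFun (‖u₀ + u₁‖⁻¹ • (u₀ + u₁)) p ≤
      horoFun u₀ p + horoFun u₁ p := by
  set v := u₀ + u₁
  have hG := sqrt_one_sub_norm_sq_pos hp
  have hcv : ‖v‖ * horoFun (‖v‖⁻¹ • v) p = (‖v‖ - ⟪p, v⟫_ℝ) / √(1 - ‖p‖ ^ 2) := by
    rcases eq_or_ne ‖v‖ 0 with h | h
    · simp [norm_eq_zero.mp h]
    · rw [horoFun, inner_smul_right, mul_div_assoc', mul_sub, mul_one, mul_inv_cancel_left₀ h]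
  have hsum : horoFun u₀ p + horoFun u₁ p = (2 - ⟪p, v⟫_ℝ) / √(1 - ‖p‖ ^ 2) := by
    rw [horoFun, horoFun, ← add_div, inner_add_right]; ring_nf
  have hcenter : 2 - ‖v‖ ≤ (2 - ‖v‖) / √(1 - ‖p‖ ^ 2) :=
    le_div_self (by linarith) hG (sqrt_one_sub_norm_sq_le_one p)
  rw [hcv, hsum]
  calc 2 - ‖v‖ + (‖v‖ - ⟪p, v⟫_ℝ) / √(1 - ‖p‖ ^ 2)
      ≤ (2 - ‖v‖) / √(1 - ‖p‖ ^ 2) + (‖v‖ - ⟪p, v⟫_ℝ) / √(1 - ‖p‖ ^ 2) := by gcongr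
    _ = (2 - ⟪p, v⟫_ℝ) / √(1 - ‖p‖ ^ 2) := by rw [← add_div]; ring_nf

lemma norm_add_lt_two {u₀ u₁ : E} (hu₀ : ‖u₀‖ = 1) (hu₁ : ‖u₁‖ = 1) (hne : u₀ ≠ u₁) :
    ‖u₀ + u₁‖ < 2 := by
  have hpar := parallelogram_law_with_norm ℝ u₀ u₁
  have hdiff : 0 < ‖u₀ - u₁‖ := norm_pos_iff.mpr (sub_ne_zero.mpr hne)
  nlinarith [norm_nonneg (u₀ + u₁)]

theorem exists_horoball_superset_inter {s : ℝ} {u₀ u₁ : E} (hu₀ : ‖u₀‖ = 1) (hu₁ : ‖u₁‖ = 1)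
    (hne : u₀ ≠ u₁) (hs : s < 1) (hint : (horoball s u₀ ∩ horoball s u₁).Nonempty) :
    ∃ s' w, 0 < s' ∧ s' < s ∧ ‖w‖ = 1 ∧ horoball s u₀ ∩ horoball s u₁ ⊆ horoball s' w := by
  set c := ‖u₀ + u₁‖
  set w := c⁻¹ • (u₀ + u₁)
  have hc2 : c < 2 := norm_add_lt_two hu₀ hu₁ hne
  have hbound : ∀ p ∈ horoball s u₀ ∩ horoball s u₁, 2 - c + c * horoFun w p < 2 * s := by
    rintro p ⟨⟨hp, hp₀⟩, -, hp₁⟩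
    linarith [two_sub_norm_add_add_mul_horoFun_le hc2.le hp]
  obtain ⟨p, hp⟩ := hint
  have hc : 2 - 2 * s < c := by
    have hw : ‖w‖ ≤ 1 := mem_closedBall_zero_iff.mp (inv_norm_smul_mem_unitClosedBall _)
    linarith [hbound p hp, mul_nonneg (norm_nonneg (u₀ + u₁)) (horoFun_pos hw hp.1.1).le]
  have hc0 : 0 < c := by linarith
  refine ⟨(c - 2 + 2 * s) / c, w, div_pos (by linarith) hc0, ?_, ?_, fun q hq => ⟨hq.1.1, ?_⟩⟩
  · rw [div_lt_iff₀ hc0]; nlinarith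
  · exact norm_smul_inv_norm (norm_pos_iff.mp hc0)
  · rw [lt_div_iff₀ hc0]; linarith [hbound q hq]

end Horoball

lemma Complex.real_inner_eq_re_mul_re_add_im_mul_im (z w : ℂ) :
    ⟪z, w⟫_ℝ = z.re * w.re + z.im * w.im := by
  rw [Complex.inner, mul_re, conj_re, conj_im]
  ring

lemma planeRot_neg_planeRot (θ : ℝ) (p : ℝ × ℝ) : planeRot (-θ) (planeRot θ p) = p := by
  have h := Real.sin_sq_add_cos_sq θ
  ext <;> simp only [planeRot, Real.sin_neg, Real.cos_neg]
  · linear_combination p.1 * h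
  · linear_combination p.2 * h

lemma image_planeRot (θ : ℝ) (S : Set (ℝ × ℝ)) : planeRot θ '' S = planeRot (-θ) ⁻¹' S :=
  congrFun (Set.image_eq_preimage_of_inverse (planeRot_neg_planeRot θ)
    fun p => by simpa using planeRot_neg_planeRot (-θ) p) S

/-- The point `planeRot θ (0, 1)` where `H(a, θ)` touches the unit circle. -/
noncomputable def horoTangent (θ : ℝ) : ℂ := I * exp (θ * I)

@[simp] lemma horoTangent_re (θ : ℝ) : (horoTangent θ).re = -Real.sin θ := by
  simp [horoTangent, exp_ofReal_mul_I_re, exp_ofReal_mul_I_im]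

@[simp] lemma horoTangent_im (θ : ℝ) : (horoTangent θ).im = Real.cos θ := by
  simp [horoTangent, exp_ofReal_mul_I_re, exp_ofReal_mul_I_im]

lemma norm_horoTangent (θ : ℝ) : ‖horoTangent θ‖ = 1 := by
  simp [horoTangent, norm_exp_ofReal_mul_I]

lemma exists_horoTangent_eq {w : ℂ} (hw : ‖w‖ = 1) : ∃ θ, horoTangent θ = w := by
  refine ⟨arg (-I * w), ?_⟩
  have h := norm_mul_exp_arg_mul_I (-I * w)
  rw [norm_mul, norm_neg, norm_I, hw, one_mul, ofReal_one, one_mul] at h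
  rw [horoTangent, h, ← mul_assoc, mul_neg, I_mul_I, neg_neg, one_mul]

lemma horoRegion_eq_of_horoTangent_eq (a : ℝ) {θ₀ θ₁ : ℝ}
    (h : horoTangent θ₀ = horoTangent θ₁) : horoRegion a θ₀ = horoRegion a θ₁ := by
  have hsin : Real.sin θ₀ = Real.sin θ₁ := by simpa using congrArg re h
  have hcos : Real.cos θ₀ = Real.cos θ₁ := by simpa using congrArg im h
  have hrot : planeRot θ₀ = planeRot θ₁ := by
    funext p
    simp only [planeRot, hsin, hcos]
  rw [horoRegion, horoRegion, hrot]

lemma mem_horoInterior_iff (a θ : ℝ) (p : ℝ × ℝ) :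
    p ∈ horoInterior a θ ↔ (1 - a ^ 2) * (1 - ⟪equivRealProd.symm p, horoTangent θ⟫_ℝ) ^ 2 <
      a ^ 2 * (1 - ‖equivRealProd.symm p‖ ^ 2) := by
  set q := planeRot (-θ) p
  have hinner : ⟪equivRealProd.symm p, horoTangent θ⟫_ℝ = q.2 := by
    rw [real_inner_eq_re_mul_re_add_im_mul_im, horoTangent_re, horoTangent_im]
    simp only [q, planeRot, Real.sin_neg, Real.cos_neg]
    change p.1 * _ + p.2 * _ = _
    ring
  have hnorm : ‖equivRealProd.symm p‖ ^ 2 = q.1 ^ 2 + q.2 ^ 2 := by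
    rw [Complex.sq_norm, normSq_apply]
    simp only [q, planeRot, Real.sin_neg, Real.cos_neg]
    change p.1 * p.1 + p.2 * p.2 = _
    linear_combination (p.1 ^ 2 + p.2 ^ 2) * (Real.sin_sq_add_cos_sq θ).symm
  have hellipse : a ^ 2 * q.1 ^ 2 + (q.2 - (1 - a ^ 2)) ^ 2 - a ^ 4 =
      (1 - a ^ 2) * (1 - q.2) ^ 2 - a ^ 2 * (1 - (q.1 ^ 2 + q.2 ^ 2)) := by ring
  rw [horoInterior, image_planeRot, Set.mem_preimage, Set.mem_ofPred_eq, hinner, hnorm, ← sub_neg,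
    hellipse, sub_neg]

noncomputable def horoRatio (a : ℝ) : ℝ := a / √(1 - a ^ 2)

lemma horoRatio_nonneg {a : ℝ} (ha : 0 ≤ a) : 0 ≤ horoRatio a := by
  unfold horoRatio; positivity

lemma horoRatio_sq {a : ℝ} (ha : a ^ 2 ≤ 1) : horoRatio a ^ 2 = a ^ 2 / (1 - a ^ 2) := by
  rw [horoRatio, div_pow, sq_sqrt (sub_nonneg.mpr ha)]

lemma horoRatio_strictMonoOn : StrictMonoOn horoRatio (Set.Ico 0 1) := by
  rintro a ⟨ha0, ha1⟩ b ⟨hb0, hb1⟩ hab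
  have hb : 0 < 1 - b ^ 2 := by nlinarith
  exact div_lt_div₀ hab (sqrt_le_sqrt (by nlinarith)) hb0 (sqrt_pos.mpr hb)

lemma horoRatio_one_div_sqrt_two : horoRatio (1 / √2) = 1 := by
  have h : 1 - (1 / √2) ^ 2 = (1 / √2) ^ 2 := by
    rw [div_pow, sq_sqrt zero_le_two]; norm_num
  rw [horoRatio, h, sqrt_sq (by positivity), div_self (by positivity)]

lemma exists_horoRatio_eq {s : ℝ} (hs : 0 < s) : ∃ a, 0 < a ∧ a < 1 ∧ horoRatio a = s := by
  have hd : 0 < √(1 + s ^ 2) := sqrt_pos.mpr (by positivity)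
  have hsq : √(1 + s ^ 2) ^ 2 = 1 + s ^ 2 := sq_sqrt (by positivity)
  have h : 1 - (s / √(1 + s ^ 2)) ^ 2 = (1 / √(1 + s ^ 2)) ^ 2 := by
    rw [div_pow, div_pow, hsq]; field_simp; ring
  refine ⟨s / √(1 + s ^ 2), by positivity, ?_, ?_⟩
  · rw [div_lt_one hd, lt_sqrt hs.le]; linarith
  · rw [horoRatio, h, sqrt_sq (by positivity)]; field_simp

lemma horoInterior_eq_preimage {a : ℝ} (ha0 : 0 ≤ a) (ha1 : a < 1) (θ : ℝ) :
    horoInterior a θ = equivRealProd.symm ⁻¹' horoball (horoRatio a) (horoTangent θ) := by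
  have hb : 0 < 1 - a ^ 2 := by nlinarith
  ext p
  rw [mem_horoInterior_iff, Set.mem_preimage,
    mem_horoball_iff_sq (horoRatio_nonneg ha0) (norm_horoTangent θ).le,
    horoRatio_sq (by nlinarith), div_mul_eq_mul_div, lt_div_iff₀ hb, mul_comm]

/-- Given two distinct horocycles of equal size `a < 1/√2` with common interior points,
there exists a strictly smaller horocycle containing their common interior. -/
theorem smaller_horocycle_encloses_common_interior
    (a : ℝ) (ha0 : 0 < a) (ha : a < 1 / Real.sqrt 2)
    (θ₀ θ₁ : ℝ)
    (hne : horoRegion a θ₀ ≠ horoRegion a θ₁)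
    (hint : (horoInterior a θ₀ ∩ horoInterior a θ₁).Nonempty) :
    ∃ a' θ' : ℝ, 0 < a' ∧ a' < a ∧
      horoInterior a θ₀ ∩ horoInterior a θ₁ ⊆ horoInterior a' θ' := by
  have hsqrt : 1 / √2 < 1 := (div_lt_one (by positivity)).mpr one_lt_sqrt_two
  have ha1 : a < 1 := ha.trans hsqrt
  have hs : horoRatio a < 1 := by
    rw [← horoRatio_one_div_sqrt_two]
    exact horoRatio_strictMonoOn ⟨ha0.le, ha1⟩ ⟨by positivity, hsqrt⟩ ha
  rw [horoInterior_eq_preimage ha0.le ha1, horoInterior_eq_preimage ha0.le ha1,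
    ← Set.preimage_inter] at hint ⊢
  obtain ⟨p, hp⟩ := hint
  obtain ⟨s', w, hs'0, hs'a, hw, hsub⟩ := exists_horoball_superset_inter (norm_horoTangent θ₀)
    (norm_horoTangent θ₁) (fun h => hne (horoRegion_eq_of_horoTangent_eq a h)) hs ⟨_, hp⟩
  obtain ⟨θ', rfl⟩ := exists_horoTangent_eq hw
  obtain ⟨a', ha'0, ha'1, rfl⟩ := exists_horoRatio_eq hs'0
  refine ⟨a', θ', ha'0,
    (horoRatio_strictMonoOn.lt_iff_lt ⟨ha'0.le, ha'1⟩ ⟨ha0.le, ha1⟩).mp hs'a, ?_⟩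
  rw [horoInterior_eq_preimage ha'0.le ha'1]
  exact Set.preimage_mono hsub
end

section
/- Let a, ω, x, y be real numbers with 0 < a < 1/√2, 0 < ω < π/2 and x² + y² < 1. Suppose that 1 − 2a² + (a²x² + y²)·cos²ω + (a²y² + x²)·sin²ω − 2y·(1 − a²)·(x·sin ω + 1)·cos ω + 2x·(1 − a²)·sin ω < 0 and 1 − 2a² + (a²x² + y²)·cos²ω + (a²y² + x²)·sin²ω + 2y·(1 − a²)·(x·sin ω − 1)·cos ω − 2x·(1 − a²)·sin ω < 0. Then (x² + 2y − 2)·(a·√(2a² − a²·cos²ω − sin²ω) + (a² − 1)·cos ω) + (x² + 2y² − 2y)·(1 + (a² − 1)·sin²ω) < 0. -/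
/-!
Averaging the two hypotheses gives a single inequality `n x² + m (y - ℓ) (y - ℓ') < 0`: the point
lies inside an ellipse symmetric about the `y`-axis whose vertices `ℓ < ℓ'` on that axis are the two
intersection points of the horocycles. The horocycle tangent at `(0,1)` through `(0,ℓ)` is
`(1 - ℓ) x² < 2 (1 - y) (y - ℓ)`. At height `y ∈ (ℓ, ℓ')` the squared half-widths of the ellipse and
of the horocycle are `(y - ℓ)` times the affine functions `m (ℓ' - y) / n` and `2 (1 - y) / (1 - ℓ)`,
so it suffices to compare these at `y = ℓ'` (the ellipse does not contain `(0,1)`, so `ℓ' ≤ 1`) and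
at `y = ℓ` (the ellipse is at least as curved there as the horocycle).
-/

/-- `horocycleForm ℓ x y < 0` is the interior of the horocycle `b²x² + (y - (1 - b²))² < b⁴` of the
Klein model, tangent to the unit circle at `(0,1)`, with `ℓ = 1 - 2b²` its lowest point. -/
def horocycleForm (ℓ x y : ℝ) : ℝ := (1 - ℓ) * x ^ 2 - 2 * (1 - y) * (y - ℓ)

theorem horocycleForm_neg_of_ellipse {m n ℓ ℓ' x y : ℝ} (hm : 0 < m) (hn : 0 < n) (hℓ : ℓ ≤ ℓ')
    (htop : 0 ≤ (1 - ℓ) * (1 - ℓ')) (hcurv : m * (ℓ' - ℓ) ≤ 2 * n) (hy : y < 1)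
    (hQ : n * x ^ 2 + m * (y - ℓ) * (y - ℓ') < 0) : horocycleForm ℓ x y < 0 := by
  have hnx : 0 ≤ n * x ^ 2 := by positivity
  have hprod : 0 < (y - ℓ) * (ℓ' - y) := pos_of_mul_pos_right (a := m) (by linarith) hm.le
  have hyℓ : ℓ < y := by
    by_contra! h
    nlinarith [mul_nonneg (sub_nonneg.2 h) (by linarith : (0 : ℝ) ≤ ℓ' - y)]
  have hyℓ' : y < ℓ' := by nlinarith
  have hℓ'1 : ℓ' ≤ 1 := by nlinarith
  have hwidth : m * (1 - ℓ) * (ℓ' - y) ≤ 2 * n * (1 - y) := by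
    nlinarith [mul_nonneg (mul_nonneg (sub_nonneg.2 hyℓ'.le) (by linarith : (0 : ℝ) ≤ 1 - ℓ))
      (sub_nonneg.2 hcurv), mul_nonneg (mul_nonneg (sub_nonneg.2 hyℓ.le) hn.le) (sub_nonneg.2 hℓ'1)]
  have : n * horocycleForm ℓ x y < 0 := by
    unfold horocycleForm
    nlinarith [mul_le_mul_of_nonneg_left hwidth (sub_nonneg.2 hyℓ.le)]
  exact neg_of_mul_neg_right this hn.le

/-- Here `c` stands for `cos ω` and `1 - c²` for `sin² ω`; `hE` is the average of the two
horocycle inequalities. -/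
theorem horocycle_through_lower_vertex_of_average_neg {a c x y : ℝ} (ha0 : 0 < a) (ha1 : a ^ 2 ≤ 1)
    (hc : c ^ 2 ≤ 1) (hy : y < 1)
    (hE : 1 - 2 * a ^ 2 + (a ^ 2 * x ^ 2 + y ^ 2) * c ^ 2 + (a ^ 2 * y ^ 2 + x ^ 2) * (1 - c ^ 2) -
      2 * (1 - a ^ 2) * c * y < 0) :
    (x ^ 2 + 2 * y - 2) * (a * √(2 * a ^ 2 - a ^ 2 * c ^ 2 - (1 - c ^ 2)) + (a ^ 2 - 1) * c) +
      (x ^ 2 + 2 * y ^ 2 - 2 * y) * (1 + (a ^ 2 - 1) * (1 - c ^ 2)) < 0 := by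
  set k := 1 - a ^ 2
  set m := 1 + (a ^ 2 - 1) * (1 - c ^ 2)
  set n := 1 - k * c ^ 2
  set D := 2 * a ^ 2 - a ^ 2 * c ^ 2 - (1 - c ^ 2)
  have hk : 0 ≤ k := by linarith
  have ham : a ^ 2 ≤ m := by nlinarith
  have han : a ^ 2 ≤ n := by nlinarith
  have hm0 : 0 < m := lt_of_lt_of_le (by positivity) ham
  have hD0 : 0 < D := by
    have hsquare : a ^ 2 * D = (m * y - k * c) ^ 2 + m * n * x ^ 2 - m * (1 - 2 * a ^ 2 +
        (a ^ 2 * x ^ 2 + y ^ 2) * c ^ 2 + (a ^ 2 * y ^ 2 + x ^ 2) * (1 - c ^ 2) - 2 * k * c * y) := by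
      ring
    refine pos_of_mul_pos_right ?_ (sq_nonneg a)
    rw [hsquare]
    nlinarith [mul_pos hm0 (neg_pos.2 hE), sq_nonneg (m * y - k * c),
      mul_nonneg (mul_nonneg hm0.le ((sq_nonneg a).trans han)) (sq_nonneg x)]
  set r := √D
  have hr2 : r ^ 2 = D := Real.sq_sqrt hD0.le
  have hr0 : 0 ≤ r := Real.sqrt_nonneg D
  have hra : r ≤ a := (Real.sqrt_le_left ha0.le).2 (by linarith [mul_nonneg hk (sq_nonneg c)])
  have key : m * horocycleForm ((k * c - a * r) / m) x y =
      (x ^ 2 + 2 * y - 2) * (a * r + (a ^ 2 - 1) * c) + (x ^ 2 + 2 * y ^ 2 - 2 * y) * m := by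
    unfold horocycleForm
    field_simp
    ring
  rw [← key]
  -- `(k c ∓ a r) / m` are the roots of `m y² - 2 k c y + 1 - 2a²`, the vertices of the ellipse `hE`.
  refine mul_neg_of_pos_of_neg hm0 (horocycleForm_neg_of_ellipse (ℓ' := (k * c + a * r) / m)
    hm0 (by linarith : 0 < n) ?_ ?_ ?_ hy ?_)
  · gcongr
    linarith [mul_nonneg ha0.le hr0]
  · have htop : (1 - (k * c - a * r) / m) * (1 - (k * c + a * r) / m) = k * (1 - c) ^ 2 / m := by
      field_simp
      linear_combination (-a ^ 2) * hr2
    rw [htop]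
    positivity
  · have hwidth : m * ((k * c + a * r) / m - (k * c - a * r) / m) = 2 * (a * r) := by
      field_simp
      ring
    rw [hwidth]
    nlinarith
  · have hvertex : n * x ^ 2 + m * (y - (k * c - a * r) / m) * (y - (k * c + a * r) / m) =
        1 - 2 * a ^ 2 + (a ^ 2 * x ^ 2 + y ^ 2) * c ^ 2 + (a ^ 2 * y ^ 2 + x ^ 2) * (1 - c ^ 2) -
          2 * k * c * y := by
      field_simp
      linear_combination (-a ^ 2) * hr2
    rwa [hvertex]

theorem common_interior_in_smaller_horocycle_general
    (a ω x y : ℝ) (ha0 : 0 < a) (ha : a < 1 / Real.sqrt 2)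
    (hxy : x ^ 2 + y ^ 2 < 1)
    (h0 : 1 - 2 * a ^ 2 + (a ^ 2 * x ^ 2 + y ^ 2) * Real.cos ω ^ 2 +
        (a ^ 2 * y ^ 2 + x ^ 2) * Real.sin ω ^ 2 -
        2 * y * (1 - a ^ 2) * (x * Real.sin ω + 1) * Real.cos ω +
        2 * x * (1 - a ^ 2) * Real.sin ω < 0)
    (h1 : 1 - 2 * a ^ 2 + (a ^ 2 * x ^ 2 + y ^ 2) * Real.cos ω ^ 2 +
        (a ^ 2 * y ^ 2 + x ^ 2) * Real.sin ω ^ 2 +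
        2 * y * (1 - a ^ 2) * (x * Real.sin ω - 1) * Real.cos ω -
        2 * x * (1 - a ^ 2) * Real.sin ω < 0) :
    (x ^ 2 + 2 * y - 2) *
        (a * Real.sqrt (2 * a ^ 2 - a ^ 2 * Real.cos ω ^ 2 - Real.sin ω ^ 2) +
          (a ^ 2 - 1) * Real.cos ω) +
      (x ^ 2 + 2 * y ^ 2 - 2 * y) * (1 + (a ^ 2 - 1) * Real.sin ω ^ 2) < 0 := by
  have ha1 : a ^ 2 ≤ 1 := by
    have := pow_lt_pow_left₀ ha ha0.le two_ne_zero
    rw [div_pow, Real.sq_sqrt zero_le_two, one_pow] at this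
    linarith
  have hy : y < 1 := by nlinarith
  rw [Real.sin_sq] at h0 h1 ⊢
  exact horocycle_through_lower_vertex_of_average_neg ha0 ha1 (Real.cos_sq_le_one ω) hy (by linarith)

/-- Inequalities (eq:int0), (eq:int1) imply (eq:int2) in the proof of part 2 of
Lemma 4.1: a point `(x,y)` of the open unit disk lying in the interiors of the two
horocycles of size `a` rotated by angles `±ω` also lies in the interior of the horocycle
tangent to the unit circle at `(0,1)` through the lower intersection point. -/
theorem common_interior_in_smaller_horocycle
    (a ω x y : ℝ) (ha0 : 0 < a) (ha : a < 1 / Real.sqrt 2)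
    (hω0 : 0 < ω) (hω : ω < Real.pi / 2) (hxy : x ^ 2 + y ^ 2 < 1)
    (h0 : 1 - 2 * a ^ 2 + (a ^ 2 * x ^ 2 + y ^ 2) * Real.cos ω ^ 2 +
        (a ^ 2 * y ^ 2 + x ^ 2) * Real.sin ω ^ 2 -
        2 * y * (1 - a ^ 2) * (x * Real.sin ω + 1) * Real.cos ω +
        2 * x * (1 - a ^ 2) * Real.sin ω < 0)
    (h1 : 1 - 2 * a ^ 2 + (a ^ 2 * x ^ 2 + y ^ 2) * Real.cos ω ^ 2 +
        (a ^ 2 * y ^ 2 + x ^ 2) * Real.sin ω ^ 2 +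
        2 * y * (1 - a ^ 2) * (x * Real.sin ω - 1) * Real.cos ω -
        2 * x * (1 - a ^ 2) * Real.sin ω < 0) :
    (x ^ 2 + 2 * y - 2) *
        (a * Real.sqrt (2 * a ^ 2 - a ^ 2 * Real.cos ω ^ 2 - Real.sin ω ^ 2) +
          (a ^ 2 - 1) * Real.cos ω) +
      (x ^ 2 + 2 * y ^ 2 - 2 * y) * (1 + (a ^ 2 - 1) * Real.sin ω ^ 2) < 0 :=
  common_interior_in_smaller_horocycle_general a ω x y ha0 ha hxy h0 h1
end
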